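/- arXiv:1812.05510 — 3 statements merged into one kernel-verified Lean document; each statement's English description precedes it below -/
import Mathlib

section
/- If G is an oriented clique with n vertices and maximum degree Δ (of the underlying graph), then n ≤ 1/2 + (Δ+1)²/2. -/
open Finset

theorem oclique_card_le {V : Type*} [Fintype V] (E : V → V → Prop)
    (hasym : ∀ a b, E a b → ¬ E b a)
    (hclique : ∀ (k : ℕ) (c : V → Fin k),
      ((∀ a b, E a b → c a ≠ c b) ∧
       (∀ a b x y, E a b → E x y → c a = c y → c b ≠ c x)) → Fintype.card V ≤ k)
    (Δ : ℕ) (hΔ : ∀ x, ({y | E x y ∨ E y x}).ncard ≤ Δ) :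
    (Fintype.card V : ℚ) ≤ 1/2 + ((Δ : ℚ) + 1)^2 / 2 := by
  classical
  set n := Fintype.card V with hn
  suffices h : 2 * n ≤ Δ^2 + 2*Δ + 2 by
    have h' := (Nat.cast_le (α := ℚ)).mpr h
    push_cast at h'
    nlinarith
  rcases Nat.eq_zero_or_pos n with h0 | hpos
  · omega
  haveI : Nonempty V := Fintype.card_pos_iff.mp hpos
  -- no loops
  have hne : ∀ a b : V, E a b → a ≠ b := by
    rintro a b hab rfl; exact hasym a a hab hab
  -- key structural lemma
  have key : ∀ u v : V, u ≠ v →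
      (E u v ∨ E v u) ∨ (∃ w, E u w ∧ E w v) ∨ (∃ w, E v w ∧ E w u) := by
    intro u v huv
    by_contra hcon
    push_neg at hcon
    obtain ⟨hadj, h2, h3⟩ := hcon
    have hn2 : 2 ≤ n := Fintype.one_lt_card_iff_nontrivial.mpr ⟨⟨u, v, huv⟩⟩
    set g : V → V := fun x => if x = v then u else x with hgdef
    have hgv : ∀ x, g x ≠ v := by
      intro x
      simp only [hgdef]
      split
      · exact huv
      · assumption
    have hg : ∀ a b : V, g a = g b → a = b ∨ (a = u ∧ b = v) ∨ (a = v ∧ b = u) := by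
      intro a b hab
      simp only [hgdef] at hab
      by_cases ha : a = v <;> by_cases hb : b = v
      · exact Or.inl (ha.trans hb.symm)
      · rw [if_pos ha, if_neg hb] at hab
        exact Or.inr (Or.inr ⟨ha, hab.symm⟩)
      · rw [if_neg ha, if_pos hb] at hab
        exact Or.inr (Or.inl ⟨hab, hb⟩)
      · rw [if_neg ha, if_neg hb] at hab
        exact Or.inl hab
    have hcard : (univ.erase v).card = n - 1 := by
      rw [Finset.card_erase_of_mem (mem_univ v), Finset.card_univ]
    let e : {x // x ∈ univ.erase v} ≃ Fin (n - 1) := Finset.equivFinOfCardEq hcard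
    let c : V → Fin (n - 1) := fun x =>
      e ⟨g x, Finset.mem_erase.mpr ⟨hgv x, mem_univ _⟩⟩
    have hc : ∀ a b : V, c a = c b → g a = g b := by
      intro a b hab
      have := e.injective hab
      exact Subtype.ext_iff.mp this
    have hcases : ∀ a b : V, c a = c b →
        a = b ∨ (a = u ∧ b = v) ∨ (a = v ∧ b = u) := fun a b hab => hg a b (hc a b hab)
    have hle := hclique (n - 1) c ⟨?_, ?_⟩
    · omega
    · -- proper
      intro a b hab hcc
      rcases hcases a b hcc with heq | ⟨p1, p2⟩ | ⟨p1, p2⟩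
      · exact hne a b hab heq
      · subst p1; subst p2; exact hadj.1 hab
      · subst p1; subst p2; exact hadj.2 hab
    · -- arc condition
      intro a b x y hab hxy hay hbx
      rcases hcases a y hay with heq | ⟨p1, p2⟩ | ⟨p1, p2⟩
      · subst heq
        rcases hcases b x hbx with heq' | ⟨q1, q2⟩ | ⟨q1, q2⟩
        · subst heq'; exact hasym a b hab hxy
        · subst q1; subst q2; exact h3 a hxy hab
        · subst q1; subst q2; exact h2 a hxy hab
      · subst p1; subst p2
        rcases hcases b x hbx with heq' | ⟨q1, q2⟩ | ⟨q1, q2⟩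
        · subst heq'; exact h2 b hab hxy
        · subst q1; exact hne _ _ hab rfl
        · subst q1; exact hadj.1 hab
      · subst p1; subst p2
        rcases hcases b x hbx with heq' | ⟨q1, q2⟩ | ⟨q1, q2⟩
        · subst heq'; exact h3 b hab hxy
        · subst q1; exact hadj.2 hab
        · subst q1; exact hne _ _ hab rfl
  -- counting
  set Nb : V → Finset V := fun x => univ.filter (fun y => E x y ∨ E y x) with hNbdef
  have hNb : ∀ x, (Nb x).card ≤ Δ := by
    intro x
    have := hΔ x
    rwa [Set.ncard_eq_toFinset_card', Set.toFinset_setOf] at this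
  set A : Finset (V × V) := univ.filter (fun p => E p.1 p.2 ∨ E p.2 p.1) with hAdef
  set B : Finset (V × V) := univ.filter (fun p => ∃ w, E p.1 w ∧ E w p.2) with hBdef
  set B' : Finset (V × V) := univ.filter (fun p => ∃ w, E p.2 w ∧ E w p.1) with hB'def
  set T : Finset (V × V × V) :=
    univ.filter (fun t => E t.1 t.2.1 ∧ E t.2.1 t.2.2) with hTdef
  -- offDiag covered
  have hcover : (univ : Finset V).offDiag ⊆ A ∪ B ∪ B' := by
    intro p hp
    rw [Finset.mem_offDiag] at hp
    rcases key p.1 p.2 hp.2.2 with h | h | h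
    · exact mem_union_left _ (mem_union_left _ (by simp [hAdef, h]))
    · exact mem_union_left _ (mem_union_right _ (by simp [hBdef, h]))
    · exact mem_union_right _ (by simp [hB'def, h])
  -- A bound
  have hA : A.card ≤ n * Δ := by
    rw [Finset.card_eq_sum_card_fiberwise (f := fun p => p.1) (t := univ)
      (fun p _ => mem_univ _)]
    calc ∑ u : V, (A.filter (fun p => p.1 = u)).card
        ≤ ∑ _u : V, Δ := by
          apply Finset.sum_le_sum
          intro u _
          refine le_trans (Finset.card_le_card_of_injOn (fun p => p.2) ?_ ?_) (hNb u)
          · intro p hp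
            simp only [hAdef, Finset.mem_coe, Finset.mem_filter] at hp
            simp only [hNbdef, Finset.mem_coe, Finset.mem_filter]
            obtain ⟨⟨_, h⟩, h1⟩ := hp
            subst h1
            exact ⟨mem_univ _, h⟩
          · intro p hp q hq hpq
            simp only [Finset.mem_coe, Finset.mem_filter] at hp hq
            exact Prod.ext (hp.2.trans hq.2.symm) hpq
      _ = n * Δ := by simp [hn, mul_comm]
  -- B bounds via T
  have hB : B.card ≤ T.card := by
    apply Finset.card_le_card_of_injOn
      (fun p => (p.1, Classical.epsilon (fun w => E p.1 w ∧ E w p.2), p.2))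
    · intro p hp
      simp only [hBdef, Finset.mem_coe, Finset.mem_filter] at hp
      have := Classical.epsilon_spec hp.2
      simp only [hTdef, Finset.mem_coe, Finset.mem_filter]
      exact ⟨mem_univ _, this⟩
    · intro p _ q _ h
      simp only [Prod.mk.injEq] at h
      exact Prod.ext h.1 h.2.2
  have hB' : B'.card ≤ T.card := by
    apply Finset.card_le_card_of_injOn
      (fun p => (p.2, Classical.epsilon (fun w => E p.2 w ∧ E w p.1), p.1))
    · intro p hp
      simp only [hB'def, Finset.mem_coe, Finset.mem_filter] at hp
      have := Classical.epsilon_spec hp.2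
      simp only [hTdef, Finset.mem_coe, Finset.mem_filter]
      exact ⟨mem_univ _, this⟩
    · intro p _ q _ h
      simp only [Prod.mk.injEq] at h
      exact Prod.ext h.2.2 h.1
  -- T bound
  have hT : 4 * T.card ≤ n * (Δ * Δ) := by
    rw [Finset.card_eq_sum_card_fiberwise (f := fun t => t.2.1) (t := univ)
      (fun t _ => mem_univ _), Finset.mul_sum]
    have step : ∀ w : V, 4 * (T.filter (fun t => t.2.1 = w)).card ≤ Δ * Δ := by
      intro w
      set inw := univ.filter (fun u => E u w) with hinw
      set outw := univ.filter (fun v => E w v) with houtw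
      have hfib : (T.filter (fun t => t.2.1 = w)).card ≤ (inw ×ˢ outw).card := by
        apply Finset.card_le_card_of_injOn (fun t => (t.1, t.2.2))
        · intro t ht
          simp only [hTdef, Finset.mem_coe, Finset.mem_filter] at ht
          obtain ⟨⟨_, h1, h2⟩, h3⟩ := ht
          subst h3
          simp only [hinw, houtw, Finset.mem_coe, Finset.mem_product, Finset.mem_filter]
          exact ⟨⟨mem_univ _, h1⟩, mem_univ _, h2⟩
        · intro t ht s hs hts
          simp only [Finset.mem_coe, Finset.mem_filter] at ht hs
          simp only [Prod.mk.injEq] at hts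
          exact Prod.ext hts.1 (Prod.ext (ht.2.trans hs.2.symm) hts.2)
      have hdisj : Disjoint inw outw := by
        rw [Finset.disjoint_left]
        intro a ha ha'
        simp only [hinw, houtw, Finset.mem_filter] at ha ha'
        exact hasym a w ha.2 ha'.2
      have hsub : inw ∪ outw ⊆ Nb w := by
        intro a ha
        simp only [hinw, houtw, Finset.mem_union, Finset.mem_filter] at ha
        simp only [hNbdef, Finset.mem_filter]
        rcases ha with ⟨_, h⟩ | ⟨_, h⟩
        · exact ⟨mem_univ _, Or.inr h⟩
        · exact ⟨mem_univ _, Or.inl h⟩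
      have hsum : inw.card + outw.card ≤ Δ := by
        rw [← Finset.card_union_of_disjoint hdisj]
        exact le_trans (Finset.card_le_card hsub) (hNb w)
      rw [Finset.card_product] at hfib
      have h4 : 4 * (inw.card * outw.card) ≤ (inw.card + outw.card)^2 := by
        have := four_mul_le_sq_add inw.card outw.card
        linarith [this, mul_assoc 4 inw.card outw.card]
      calc 4 * (T.filter (fun t => t.2.1 = w)).card
          ≤ 4 * (inw.card * outw.card) := by omega
        _ ≤ (inw.card + outw.card)^2 := h4
        _ ≤ Δ^2 := Nat.pow_le_pow_left hsum 2
        _ = Δ * Δ := sq Δ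
    calc ∑ w : V, 4 * (T.filter (fun t => t.2.1 = w)).card
        ≤ ∑ _w : V, Δ * Δ := Finset.sum_le_sum (fun w _ => step w)
      _ = n * (Δ * Δ) := by simp [hn, mul_comm]
  -- combine
  have hoff : (univ : Finset V).offDiag.card = n * n - n := by
    rw [Finset.offDiag_card]; simp [hn]
  have hmain : n * n - n ≤ n * Δ + 2 * T.card := by
    calc n * n - n = (univ : Finset V).offDiag.card := hoff.symm
      _ ≤ (A ∪ B ∪ B').card := Finset.card_le_card hcover
      _ ≤ A.card + B.card + B'.card :=
          le_trans (Finset.card_union_le _ _)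
            (by have := Finset.card_union_le A B; omega)
      _ ≤ n * Δ + 2 * T.card := by omega
  -- finish
  have hnn : n * n - n = n * (n - 1) := by
    rw [Nat.mul_sub, mul_one]
  have h4 : n * (2 * (n - 1)) ≤ n * (2 * Δ + Δ * Δ) := by
    have e1 : n * (2 * (n - 1)) = 2 * (n * (n - 1)) := by ring
    have e2 : n * (2 * Δ + Δ * Δ) = 2 * (n * Δ) + n * (Δ * Δ) := by ring
    omega
  have h5 : 2 * (n - 1) ≤ 2 * Δ + Δ * Δ := Nat.le_of_mul_le_mul_left h4 hpos
  have hsq : Δ ^ 2 = Δ * Δ := sq Δ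
  omega
end

section
/- Every non-transitive tournament on 4 vertices admits a homomorphism to QR_7. -/
/-!
A non-transitive tournament contains a directed triangle, which we relabel as `0 → 1 → 2 → 0`
inside `Fin 4`. The fourth vertex is joined to the triangle in one of `2 ^ 3` ways, and for each
of them one of the triangles `0 → 1 → 3 → 0` or `0 → 1 → 5 → 0` of `QR_7` has a vertex outside
it joined in the same way.
-/

def qr7 (i j : ZMod 7) : Prop := j - i = 1 ∨ j - i = 2 ∨ j - i = 4

instance : DecidableRel qr7 := fun _ _ => inferInstanceAs (Decidable (_ ∨ _ ∨ _))

theorem qr7_three_cycle_extends (p q r : Prop) :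
    ∃ z w : ZMod 7, qr7 0 1 ∧ qr7 1 z ∧ qr7 z 0 ∧
      (p → qr7 w 0) ∧ (¬ p → qr7 0 w) ∧ (q → qr7 w 1) ∧ (¬ q → qr7 1 w) ∧
      (r → qr7 w z) ∧ (¬ r → qr7 z w) := by
  by_cases hp : p <;> by_cases hq : q <;> by_cases hr : r <;>
    simp only [hp, hq, hr, not_true, not_false_eq_true, true_implies, false_implies, and_true,
      true_and] <;> decide

section Tournament

variable {α : Type*} {T : α → α → Prop}

theorem ne_of_arc (hirr : ∀ i, ¬ T i i) {a b : α} (hab : T a b) : a ≠ b := by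
  rintro rfl
  exact hirr a hab

theorem exists_three_cycle_of_not_transitive (hirr : ∀ i, ¬ T i i)
    (htour : ∀ i j, i ≠ j → (T i j ↔ ¬ T j i)) (hnontrans : ¬ ∀ a b c, T a b → T b c → T a c) :
    ∃ a b c, T a b ∧ T b c ∧ T c a := by
  push Not at hnontrans
  obtain ⟨a, b, c, hab, hbc, hac⟩ := hnontrans
  have hne : a ≠ c := by rintro rfl; exact (htour a b (ne_of_arc hirr hab)).1 hab hbc
  exact ⟨a, b, c, hab, hbc, by_contra fun hca => hac ((htour a c hne).2 hca)⟩

theorem exists_hom_of_exists_hom_comp {β γ : Type*} (σ : α ≃ β) {S : β → β → Prop}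
    {H : γ → γ → Prop} (h : ∃ φ : α → γ, ∀ i j, S (σ i) (σ j) → H (φ i) (φ j)) :
    ∃ ψ : β → γ, ∀ a b, S a b → H (ψ a) (ψ b) := by
  obtain ⟨φ, hφ⟩ := h
  exact ⟨φ ∘ σ.symm, fun a b hab => hφ _ _ (by simpa using hab)⟩

end Tournament

theorem exists_perm_fin_four (a b c : Fin 4) (hab : a ≠ b) (hbc : b ≠ c) (hca : c ≠ a) :
    ∃ σ : Equiv.Perm (Fin 4), σ 0 = a ∧ σ 1 = b ∧ σ 2 = c := by
  revert a b c
  decide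

theorem exists_qr7_hom_of_three_cycle (T : Fin 4 → Fin 4 → Prop) (hirr : ∀ i, ¬ T i i)
    (htour : ∀ i j, i ≠ j → (T i j ↔ ¬ T j i)) (h01 : T 0 1) (h12 : T 1 2) (h20 : T 2 0) :
    ∃ φ : Fin 4 → ZMod 7, ∀ i j, T i j → qr7 (φ i) (φ j) := by
  obtain ⟨z, w, h01', h1z, hz0, hw0, h0w, hw1, h1w, hwz, hzw⟩ :=
    qr7_three_cycle_extends (T 3 0) (T 3 1) (T 3 2)
  refine ⟨![0, 1, z, w], fun i j hij => ?_⟩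
  -- An arc `i → j` is a loop, reverses an arc of the triangle, or is one of the arcs above.
  fin_cases i <;> fin_cases j <;>
    first
      | exact (hirr _ hij).elim
      | have hji := (htour _ _ (by decide)).1 hij; solve_by_elim

theorem nontransitive_T4_to_qr7 (T : Fin 4 → Fin 4 → Prop)
    (hirr : ∀ i, ¬ T i i)
    (htour : ∀ i j : Fin 4, i ≠ j → (T i j ↔ ¬ T j i))
    (hnontrans : ¬ ∀ a b c, T a b → T b c → T a c) :
    ∃ φ : Fin 4 → ZMod 7, ∀ a b, T a b → qr7 (φ a) (φ b) := by
  obtain ⟨a, b, c, hab, hbc, hca⟩ := exists_three_cycle_of_not_transitive hirr htour hnontrans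
  obtain ⟨σ, rfl, rfl, rfl⟩ :=
    exists_perm_fin_four _ _ _ (ne_of_arc hirr hab) (ne_of_arc hirr hbc) (ne_of_arc hirr hca)
  exact exists_hom_of_exists_hom_comp σ <|
    exists_qr7_hom_of_three_cycle (fun i j => T (σ i) (σ j)) (fun i => hirr (σ i))
      (fun i j hij => htour (σ i) (σ j) (σ.injective.ne hij)) hab hbc hca
end

section
/- There exists an oriented clique on 11 vertices whose underlying graph is 4-regular; consequently the oriented chromatic number of the family of orientations of connected graphs with maximum degree at most 4 is at least 11. -/
/-!
The orientation of the circulant graph `C₁₁(1, 3)` with arcs `u → u + 1` and `u → u + 3` is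
4-regular and an oriented clique: the arc differences `±1, ±3` together with the 2-path
differences `±2, ±4, ±6` exhaust the nonzero residues mod 11. In an oriented clique, any two
vertices are joined by an arc or a directed 2-path, and an oriented colouring must separate
them in either case, so it is injective and needs at least 11 colours.
-/

section OrientedClique

variable {V C : Type*}

def IsOrientedClique (E : V → V → Prop) : Prop :=
  ∀ x y, x ≠ y → E x y ∨ E y x ∨ (∃ z, E x z ∧ E z y) ∨ (∃ z, E y z ∧ E z x)

def IsOrientedColouring (E : V → V → Prop) (c : V → C) : Prop :=
  (∀ a b, E a b → c a ≠ c b) ∧ (∀ a b x y, E a b → E x y → c a = c y → c b ≠ c x)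

theorem IsOrientedClique.injective {E : V → V → Prop} (hE : IsOrientedClique E) {c : V → C}
    (hc : IsOrientedColouring E c) : Function.Injective c := by
  obtain ⟨hproper, harcs⟩ := hc
  intro u v huv
  by_contra hne
  rcases hE u v hne with hE | hE | ⟨z, huz, hzv⟩ | ⟨z, hvz, hzu⟩
  · exact hproper u v hE huv
  · exact hproper v u hE huv.symm
  · exact harcs u z z v huz hzv huv rfl
  · exact harcs v z z u hvz hzu huv.symm rfl

theorem IsOrientedClique.card_le [Fintype V] [Fintype C] {E : V → V → Prop}
    (hE : IsOrientedClique E) {c : V → C} (hc : IsOrientedColouring E c) :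
    Fintype.card V ≤ Fintype.card C :=
  Fintype.card_le_of_injective c (hE.injective hc)

end OrientedClique

def circulantOrientation (u v : Fin 11) : Prop := v - u = 1 ∨ v - u = 3

instance : DecidableRel circulantOrientation := fun u v => by
  unfold circulantOrientation; infer_instance

theorem circulantOrientation_asymm (a b : Fin 11) :
    circulantOrientation a b → ¬ circulantOrientation b a := by
  revert a b; decide

theorem isOrientedClique_circulantOrientation : IsOrientedClique circulantOrientation := by
  unfold IsOrientedClique; decide

theorem ncard_circulantOrientation_neighbours (x : Fin 11) :
    {y | circulantOrientation x y ∨ circulantOrientation y x}.ncard = 4 := by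
  rw [Set.ncard_eq_toFinset_card']
  revert x; decide

theorem exists_quartic_oclique_11 : ∃ E : Fin 11 → Fin 11 → Prop,
    (∀ a b, E a b → ¬ E b a) ∧
    (∀ x y : Fin 11, x ≠ y →
      E x y ∨ E y x ∨ (∃ z, E x z ∧ E z y) ∨ (∃ z, E y z ∧ E z x)) ∧
    (∀ x, ({y | E x y ∨ E y x}).ncard = 4) ∧
    (∀ (k : ℕ) (c : Fin 11 → Fin k),
      ((∀ a b, E a b → c a ≠ c b) ∧
       (∀ a b x y, E a b → E x y → c a = c y → c b ≠ c x)) → 11 ≤ k) :=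
  ⟨circulantOrientation, circulantOrientation_asymm, isOrientedClique_circulantOrientation,
    ncard_circulantOrientation_neighbours, fun k _ hc => by
      simpa using isOrientedClique_circulantOrientation.card_le hc⟩
end
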